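/- arXiv:2502.01180 — 10 statements merged into one kernel-verified Lean document; each statement's English description precedes it below -/
import Mathlib

section
/- Suppose A ≥ |B|E entrywise and every entry of F is nonnegative. Then for every x ∈ ℝⁿ with x ≥ 0, every u ∈ ℝᵐ with |u| ≤ Ex, and every w ∈ ℝˡ with w ≥ 0, the vector Ax + Bu + Fw is entrywise nonnegative (the positive orthant is invariant under the dynamics x⁺ = Ax + Bu + Fw). -/
open Matrix

/-- If `A ≥ |B|E` entrywise and `F` is entrywise nonnegative, then for every
`x ≥ 0`, `u` with `|u| ≤ Ex`, and `w ≥ 0`, the vector `Ax + Bu + Fw` is entrywise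
nonnegative. -/
theorem positive_orthant_invariant {n m l : ℕ}
    (A : Matrix (Fin n) (Fin n) ℝ) (B : Matrix (Fin n) (Fin m) ℝ)
    (F : Matrix (Fin n) (Fin l) ℝ) (E : Matrix (Fin m) (Fin n) ℝ)
    (hE : ∀ i j, 0 ≤ E i j)
    (hA : ∀ i j, ((Matrix.of fun i j => |B i j|) * E) i j ≤ A i j)
    (hF : ∀ i j, 0 ≤ F i j)
    (x : Fin n → ℝ) (hx : 0 ≤ x)
    (u : Fin m → ℝ) (hu : ∀ i, |u i| ≤ E.mulVec x i)
    (w : Fin l → ℝ) (hw : 0 ≤ w) :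
    0 ≤ A.mulVec x + B.mulVec u + F.mulVec w := by
  intro i
  simp only [Pi.add_apply, Pi.zero_apply]
  have hFw : 0 ≤ F.mulVec w i := by
    rw [Matrix.mulVec, dotProduct]
    exact Finset.sum_nonneg fun j _ => mul_nonneg (hF i j) (hw j)
  have hAx : ∑ j, |B i j| * E.mulVec x j ≤ A.mulVec x i := by
    calc ∑ j, |B i j| * E.mulVec x j
        = ((Matrix.of fun i j => |B i j|) * E).mulVec x i := by
          rw [← Matrix.mulVec_mulVec, Matrix.mulVec, dotProduct]; rfl
      _ = ∑ j, ((Matrix.of fun i j => |B i j|) * E) i j * x j := by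
          rw [Matrix.mulVec, dotProduct]
      _ ≤ ∑ j, A i j * x j :=
          Finset.sum_le_sum fun j _ => mul_le_mul_of_nonneg_right (hA i j) (hx j)
      _ = A.mulVec x i := by rw [Matrix.mulVec, dotProduct]
  have hBu : |B.mulVec u i| ≤ ∑ j, |B i j| * E.mulVec x j := by
    calc |B.mulVec u i| = |∑ j, B i j * u j| := by rw [Matrix.mulVec, dotProduct]
      _ ≤ ∑ j, |B i j * u j| := Finset.abs_sum_le_sum_abs _ _
      _ = ∑ j, |B i j| * |u j| := by simp [abs_mul]
      _ ≤ ∑ j, |B i j| * E.mulVec x j :=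
          Finset.sum_le_sum fun j _ =>
            mul_le_mul_of_nonneg_left (hu j) (abs_nonneg _)
  have := neg_abs_le (B.mulVec u i)
  linarith
end

section
/- Let p ∈ ℝⁿ with p ≥ 0 and suppose γ ≥ Fᵀp entrywise. Then for every x ∈ ℝⁿ with x ≥ 0, the inf over u ∈ ℝᵐ with |u| ≤ Ex of the sup over w ∈ ℝˡ with w ≥ 0 of [sᵀx + rᵀu − γᵀw + pᵀ(Ax + Bu + Fw)] equals T(p)ᵀx, where T(p) = s + Aᵀp − Eᵀ|r + Bᵀp|; moreover the outer infimum is attained at u = −K(p)x and the inner supremum at w = 0. -/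
open Matrix

/-- The Bellman operator `T(p) = s + Aᵀp − Eᵀ|r + Bᵀp|`. -/
noncomputable def Tbell {n m : ℕ} (A : Matrix (Fin n) (Fin n) ℝ) (B : Matrix (Fin n) (Fin m) ℝ)
    (E : Matrix (Fin m) (Fin n) ℝ) (s : Fin n → ℝ) (r : Fin m → ℝ) (p : Fin n → ℝ) :
    Fin n → ℝ :=
  s + Aᵀ.mulVec p - Eᵀ.mulVec fun i => |(r + Bᵀ.mulVec p) i|

/-- The optimal feedback gain `K(p)`: its `i`-th row is `sign(rᵢ + Bᵢᵀp) · Eᵢ`. -/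
noncomputable def Kgain {n m : ℕ} (B : Matrix (Fin n) (Fin m) ℝ)
    (E : Matrix (Fin m) (Fin n) ℝ) (r : Fin m → ℝ) (p : Fin n → ℝ) :
    Matrix (Fin m) (Fin n) ℝ :=
  Matrix.of fun i j => Real.sign ((r + Bᵀ.mulVec p) i) * E i j

private lemma dot_mulVec_swap {n k : ℕ} (M : Matrix (Fin n) (Fin k) ℝ)
    (p : Fin n → ℝ) (v : Fin k → ℝ) :
    p ⬝ᵥ M.mulVec v = Mᵀ.mulVec p ⬝ᵥ v := by
  simp only [Matrix.mulVec, dotProduct, Matrix.transpose_apply, Finset.mul_sum,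
    Finset.sum_mul]
  rw [Finset.sum_comm]
  congr 1; ext i; congr 1; ext j; ring

/-- If `p ≥ 0` and `γ ≥ Fᵀp`, then for every `x ≥ 0`, the min over `|u| ≤ Ex` of
the max over `w ≥ 0` of `sᵀx + rᵀu − γᵀw + pᵀ(Ax + Bu + Fw)` equals `T(p)ᵀx`; the outer
infimum is attained at `u = −K(p)x` and the inner supremum at `w = 0`. -/
theorem bellman_step {n m l : ℕ}
    (A : Matrix (Fin n) (Fin n) ℝ) (B : Matrix (Fin n) (Fin m) ℝ)
    (F : Matrix (Fin n) (Fin l) ℝ) (E : Matrix (Fin m) (Fin n) ℝ)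
    (s : Fin n → ℝ) (r : Fin m → ℝ) (γ : Fin l → ℝ)
    (hE : ∀ i j, 0 ≤ E i j)
    (p : Fin n → ℝ) (hp : 0 ≤ p) (hγ : Fᵀ.mulVec p ≤ γ)
    (x : Fin n → ℝ) (hx : 0 ≤ x) :
    IsLeast {v : ℝ | ∃ u : Fin m → ℝ, (∀ i, |u i| ≤ E.mulVec x i) ∧
        IsGreatest {z : ℝ | ∃ w : Fin l → ℝ, 0 ≤ w ∧
          z = s ⬝ᵥ x + r ⬝ᵥ u - γ ⬝ᵥ w + p ⬝ᵥ (A.mulVec x + B.mulVec u + F.mulVec w)} v}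
      (Tbell A B E s r p ⬝ᵥ x) ∧
    IsGreatest {z : ℝ | ∃ w : Fin l → ℝ, 0 ≤ w ∧
        z = s ⬝ᵥ x + r ⬝ᵥ (-(Kgain B E r p).mulVec x) - γ ⬝ᵥ w +
          p ⬝ᵥ (A.mulVec x + B.mulVec (-(Kgain B E r p).mulVec x) + F.mulVec w)}
      (Tbell A B E s r p ⬝ᵥ x) ∧
    s ⬝ᵥ x + r ⬝ᵥ (-(Kgain B E r p).mulVec x) - γ ⬝ᵥ (0 : Fin l → ℝ) +
        p ⬝ᵥ (A.mulVec x + B.mulVec (-(Kgain B E r p).mulVec x) + F.mulVec (0 : Fin l → ℝ)) =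
      Tbell A B E s r p ⬝ᵥ x := by

  set q : Fin m → ℝ := r + Bᵀ.mulVec p with hqdef
  have hEx : ∀ i, 0 ≤ E.mulVec x i := by
    intro i
    simp only [Matrix.mulVec, dotProduct]
    exact Finset.sum_nonneg fun j _ => mul_nonneg (hE i j) (hx j)
  have hK : ∀ i, (Kgain B E r p).mulVec x i = Real.sign (q i) * E.mulVec x i := by
    intro i
    simp [Kgain, hqdef, Matrix.mulVec, dotProduct, Matrix.transpose_apply,
      Finset.mul_sum, mul_assoc]
  have hobj : ∀ (u : Fin m → ℝ) (w : Fin l → ℝ),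
      s ⬝ᵥ x + r ⬝ᵥ u - γ ⬝ᵥ w + p ⬝ᵥ (A.mulVec x + B.mulVec u + F.mulVec w)
        = (s ⬝ᵥ x + p ⬝ᵥ A.mulVec x) + q ⬝ᵥ u + (Fᵀ.mulVec p - γ) ⬝ᵥ w := by
    intro u w
    simp only [dotProduct_add, hqdef, add_dotProduct, sub_dotProduct,
      dot_mulVec_swap B p u, dot_mulVec_swap F p w]
    ring
  have hT : Tbell A B E s r p ⬝ᵥ x
      = (s ⬝ᵥ x + p ⬝ᵥ A.mulVec x) - (fun i => |q i|) ⬝ᵥ E.mulVec x := by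
    simp only [Tbell, add_dotProduct, sub_dotProduct, ← hqdef]
    rw [← dot_mulVec_swap A p x, ← dot_mulVec_swap E (fun i => |q i|) x]
  have hqK : ∀ i, q i * Real.sign (q i) = |q i| := by
    intro i
    rcases lt_trichotomy (q i) 0 with h | h | h
    · rw [Real.sign_of_neg h, abs_of_neg h]; ring
    · simp [h]
    · rw [Real.sign_of_pos h, abs_of_pos h]; ring
  have hdw : ∀ w : Fin l → ℝ, 0 ≤ w → (Fᵀ.mulVec p - γ) ⬝ᵥ w ≤ 0 := by
    intro w hw
    apply Finset.sum_nonpos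
    intro i _
    exact mul_nonpos_of_nonpos_of_nonneg (sub_nonpos.mpr (hγ i)) (hw i)
  have hqKx : q ⬝ᵥ (-(Kgain B E r p).mulVec x) = -((fun i => |q i|) ⬝ᵥ E.mulVec x) := by
    rw [dotProduct_neg, neg_inj]
    apply Finset.sum_congr rfl
    intro i _
    rw [hK i, ← mul_assoc, hqK i]
  have heq3 : s ⬝ᵥ x + r ⬝ᵥ (-(Kgain B E r p).mulVec x) - γ ⬝ᵥ (0 : Fin l → ℝ) +
        p ⬝ᵥ (A.mulVec x + B.mulVec (-(Kgain B E r p).mulVec x) + F.mulVec (0 : Fin l → ℝ)) =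
      Tbell A B E s r p ⬝ᵥ x := by
    rw [hobj, hqKx, hT, dotProduct_zero]
    ring
  have hgreat : IsGreatest {z : ℝ | ∃ w : Fin l → ℝ, 0 ≤ w ∧
        z = s ⬝ᵥ x + r ⬝ᵥ (-(Kgain B E r p).mulVec x) - γ ⬝ᵥ w +
          p ⬝ᵥ (A.mulVec x + B.mulVec (-(Kgain B E r p).mulVec x) + F.mulVec w)}
      (Tbell A B E s r p ⬝ᵥ x) := by
    constructor
    · exact ⟨0, le_refl 0, heq3.symm⟩
    · rintro z ⟨w, hw, rfl⟩
      rw [hobj, hqKx, hT]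
      have := hdw w hw
      linarith
  refine ⟨⟨⟨-(Kgain B E r p).mulVec x, ?_, hgreat⟩, ?_⟩, hgreat, heq3⟩
  · intro i
    rw [Pi.neg_apply, abs_neg, hK i, abs_mul, abs_of_nonneg (hEx i)]
    calc |Real.sign (q i)| * E.mulVec x i ≤ 1 * E.mulVec x i := by
          apply mul_le_mul_of_nonneg_right _ (hEx i)
          rcases lt_trichotomy (q i) 0 with h | h | h
          · rw [Real.sign_of_neg h]; norm_num
          · simp [h]
          · rw [Real.sign_of_pos h]; norm_num
      _ = E.mulVec x i := one_mul _
  · rintro v ⟨u, hu, hg⟩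
    have hmem := hg.2 ⟨0, le_refl 0, rfl⟩
    rw [hobj, dotProduct_zero, add_zero] at hmem
    rw [hT]
    have hqu : -((fun i => |q i|) ⬝ᵥ E.mulVec x) ≤ q ⬝ᵥ u := by
      rw [neg_le]
      calc -(q ⬝ᵥ u) = (fun i => -(q i * u i)) ⬝ᵥ (fun _ => (1:ℝ)) := by
            simp [dotProduct, Finset.sum_neg_distrib]
        _ ≤ (fun i => |q i|) ⬝ᵥ E.mulVec x := by
            apply Finset.sum_le_sum
            intro i _
            calc -(q i * u i) * 1 = -(q i * u i) := mul_one _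
              _ ≤ |q i * u i| := neg_le_abs _
              _ = |q i| * |u i| := abs_mul _ _
              _ ≤ |q i| * E.mulVec x i := mul_le_mul_of_nonneg_left (hu i) (abs_nonneg _)
    linarith
end

section
/- Suppose A ≥ |B|E entrywise. Then the Bellman operator T(p) = s + Aᵀp − Eᵀ|r + Bᵀp| is monotone: for all p, q ∈ ℝⁿ, if p ≤ q entrywise then T(p) ≤ T(q) entrywise. -/
open Matrix

/-- If `A ≥ |B|E` entrywise (with `E` entrywise nonnegative), then the Bellman
operator `T` is monotone: `p ≤ q` entrywise implies `T(p) ≤ T(q)` entrywise. -/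
theorem bellman_monotone {n m : ℕ}
    (A : Matrix (Fin n) (Fin n) ℝ) (B : Matrix (Fin n) (Fin m) ℝ)
    (E : Matrix (Fin m) (Fin n) ℝ) (s : Fin n → ℝ) (r : Fin m → ℝ)
    (hE : ∀ i j, 0 ≤ E i j)
    (hA : ∀ i j, ((Matrix.of fun i j => |B i j|) * E) i j ≤ A i j)
    (p q : Fin n → ℝ) (hpq : p ≤ q) :
    Tbell A B E s r p ≤ Tbell A B E s r q := by
  intro j
  have hd : ∀ i, 0 ≤ q i - p i := fun i => sub_nonneg.2 (hpq i)
  simp only [Tbell, Pi.add_apply, Pi.sub_apply, mulVec, dotProduct, transpose_apply]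
  have step1 : ∀ k, |r k + ∑ i, B i k * q i| - |r k + ∑ i, B i k * p i|
      ≤ ∑ i, |B i k| * (q i - p i) := by
    intro k
    calc |r k + ∑ i, B i k * q i| - |r k + ∑ i, B i k * p i|
        ≤ |(r k + ∑ i, B i k * q i) - (r k + ∑ i, B i k * p i)| :=
          abs_sub_abs_le_abs_sub _ _
      _ = |∑ i, B i k * (q i - p i)| := by
          rw [add_sub_add_left_eq_sub, ← Finset.sum_sub_distrib]
          simp [mul_sub]
      _ ≤ ∑ i, |B i k * (q i - p i)| := Finset.abs_sum_le_sum_abs _ _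
      _ = ∑ i, |B i k| * (q i - p i) := by
          refine Finset.sum_congr rfl fun i _ => ?_
          rw [abs_mul, abs_of_nonneg (hd i)]
  have step2 : (∑ k, E k j * |r k + ∑ i, B i k * q i|)
      - (∑ k, E k j * |r k + ∑ i, B i k * p i|)
      ≤ ∑ i, A i j * (q i - p i) := by
    rw [← Finset.sum_sub_distrib]
    calc (∑ k, (E k j * |r k + ∑ i, B i k * q i| - E k j * |r k + ∑ i, B i k * p i|))
        = ∑ k, E k j * (|r k + ∑ i, B i k * q i| - |r k + ∑ i, B i k * p i|) := by
          simp [mul_sub]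
      _ ≤ ∑ k, E k j * ∑ i, |B i k| * (q i - p i) :=
          Finset.sum_le_sum fun k _ => mul_le_mul_of_nonneg_left (step1 k) (hE k j)
      _ = ∑ i, (∑ k, |B i k| * E k j) * (q i - p i) := by
          simp only [Finset.mul_sum, Finset.sum_mul]
          rw [Finset.sum_comm]
          refine Finset.sum_congr rfl fun i _ => Finset.sum_congr rfl fun k _ => by ring
      _ ≤ ∑ i, A i j * (q i - p i) := by
          refine Finset.sum_le_sum fun i _ => mul_le_mul_of_nonneg_right ?_ (hd i)
          have := hA i j
          simpa [Matrix.mul_apply] using this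
  have hs : ∑ i, A i j * (q i - p i) = (∑ i, A i j * q i) - ∑ i, A i j * p i := by
    simp [mul_sub, Finset.sum_sub_distrib]
  rw [hs] at step2
  linarith
end

section
/- Suppose A ≥ |B|E and s ≥ Eᵀ|r| entrywise. Define the value-iteration sequence p₀ = 0 and p_{k+1} = T(p_k). Then the sequence (p_k) is entrywise nondecreasing and each p_k is nonnegative; moreover, if q ∈ ℝⁿ satisfies q ≥ 0 and T(q) ≤ q, then p_k ≤ q for all k. -/
open Matrix

lemma Tbell_mono {n m : ℕ}
    (A : Matrix (Fin n) (Fin n) ℝ) (B : Matrix (Fin n) (Fin m) ℝ)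
    (E : Matrix (Fin m) (Fin n) ℝ) (s : Fin n → ℝ) (r : Fin m → ℝ)
    (hE : ∀ i j, 0 ≤ E i j)
    (hA : ∀ i j, ((Matrix.of fun i j => |B i j|) * E) i j ≤ A i j)
    {p p' : Fin n → ℝ} (h : p ≤ p') :
    Tbell A B E s r p ≤ Tbell A B E s r p' := by
  intro i
  have hd : ∀ k, 0 ≤ p' k - p k := fun k => sub_nonneg.2 (h k)
  set d : Fin n → ℝ := fun k => p' k - p k with hdd
  have step1 : ∀ j, |(r + Bᵀ.mulVec p') j| - |(r + Bᵀ.mulVec p) j| ≤ ∑ k, |B k j| * d k := by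
    intro j
    have h1 : |(r + Bᵀ.mulVec p') j| - |(r + Bᵀ.mulVec p) j|
        ≤ |(r + Bᵀ.mulVec p') j - (r + Bᵀ.mulVec p) j| := abs_sub_abs_le_abs_sub _ _
    have h2 : (r + Bᵀ.mulVec p') j - (r + Bᵀ.mulVec p) j = ∑ k, B k j * d k := by
      simp [mulVec, dotProduct, transpose_apply, hdd, mul_sub, Finset.sum_sub_distrib]
    calc |(r + Bᵀ.mulVec p') j| - |(r + Bᵀ.mulVec p) j|
        ≤ |∑ k, B k j * d k| := by rw [← h2]; exact h1
      _ ≤ ∑ k, |B k j * d k| := Finset.abs_sum_le_sum_abs _ _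
      _ = ∑ k, |B k j| * d k := by
          refine Finset.sum_congr rfl fun k _ => ?_
          rw [abs_mul, abs_of_nonneg (hd k)]
  have key : (Eᵀ.mulVec fun j => |r j + Bᵀ.mulVec p' j|) i
      - (Eᵀ.mulVec fun j => |r j + Bᵀ.mulVec p j|) i
      ≤ Aᵀ.mulVec p' i - Aᵀ.mulVec p i := by
    simp only [mulVec, dotProduct, transpose_apply]
    rw [← Finset.sum_sub_distrib, ← Finset.sum_sub_distrib]
    calc ∑ j, (E j i * |(r + Bᵀ.mulVec p') j| - E j i * |(r + Bᵀ.mulVec p) j|)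
        ≤ ∑ j, E j i * ∑ k, |B k j| * d k := by
          refine Finset.sum_le_sum fun j _ => ?_
          rw [← mul_sub]
          exact mul_le_mul_of_nonneg_left (step1 j) (hE j i)
      _ = ∑ k, (∑ j, |B k j| * E j i) * d k := by
          simp_rw [Finset.mul_sum, Finset.sum_mul]
          rw [Finset.sum_comm]
          refine Finset.sum_congr rfl fun k _ => Finset.sum_congr rfl fun j _ => by ring
      _ ≤ ∑ k, A k i * d k := by
          refine Finset.sum_le_sum fun k _ => ?_
          refine mul_le_mul_of_nonneg_right ?_ (hd k)
          have := hA k i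
          simpa [Matrix.mul_apply] using this
      _ = ∑ k, (A k i * p' k - A k i * p k) :=
          Finset.sum_congr rfl fun k _ => mul_sub _ _ _
  simp only [Tbell, Pi.add_apply, Pi.sub_apply]
  linarith

/-- Suppose `A ≥ |B|E` and `s ≥ Eᵀ|r|` entrywise. If `p₀ = 0` and
`p_{k+1} = T(p_k)`, then the sequence is entrywise nondecreasing and nonnegative, and
`p_k ≤ q` for every `q ≥ 0` with `T(q) ≤ q`. -/
theorem value_iteration_monotone {n m : ℕ}
    (A : Matrix (Fin n) (Fin n) ℝ) (B : Matrix (Fin n) (Fin m) ℝ)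
    (E : Matrix (Fin m) (Fin n) ℝ) (s : Fin n → ℝ) (r : Fin m → ℝ)
    (hE : ∀ i j, 0 ≤ E i j)
    (hA : ∀ i j, ((Matrix.of fun i j => |B i j|) * E) i j ≤ A i j)
    (hs : Eᵀ.mulVec (fun i => |r i|) ≤ s)
    (P : ℕ → Fin n → ℝ) (hP0 : P 0 = 0)
    (hPs : ∀ k, P (k + 1) = Tbell A B E s r (P k)) :
    (∀ k, P k ≤ P (k + 1)) ∧ (∀ k, 0 ≤ P k) ∧
      (∀ q : Fin n → ℝ, 0 ≤ q → Tbell A B E s r q ≤ q → ∀ k, P k ≤ q) := by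
  have hbase : P 0 ≤ P 1 := by
    rw [hP0, hPs 0, hP0]
    intro i
    have := hs i
    simp only [Tbell, Pi.add_apply, Pi.sub_apply, Pi.zero_apply, mulVec_zero, add_zero]
    simpa using this
  have hmono : ∀ k, P k ≤ P (k + 1) := by
    intro k
    induction k with
    | zero => exact hbase
    | succ k ih =>
      rw [hPs k, hPs (k+1)]
      exact Tbell_mono A B E s r hE hA ih
  refine ⟨hmono, ?_, ?_⟩
  · intro k
    induction k with
    | zero => rw [hP0]
    | succ k ih => exact le_trans ih (hmono k)
  · intro q hq hTq k
    induction k with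
    | zero => rw [hP0]; exact hq
    | succ k ih =>
      rw [hPs k]
      exact le_trans (Tbell_mono A B E s r hE hA ih) hTq
end

section
/- Suppose A ≥ |B|E and s ≥ Eᵀ|r| entrywise, and define p₀ = 0, p_{k+1} = T(p_k). Then the sequence (p_k) converges (to some limit in ℝⁿ) if and only if T has a nonnegative fixed point; and when it converges, the limit p* satisfies p* = T(p*), p* ≥ 0, and p* ≤ q for every q ≥ 0 with q = T(q), i.e. p* is the least nonnegative fixed point of T. -/
open Matrix Filter

open Function Topology

/-!
The Bellman operator `T` is monotone: since `|x + y| ≤ |x| + |y|` and `|Bᵀ d| ≤ |B|ᵀ d` for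
`d ≥ 0`, the hypothesis `A ≥ |B| E` makes the linear part `Aᵀ p` dominate the growth of the
penalty `Eᵀ |r + Bᵀ p|`. The hypothesis `s ≥ Eᵀ |r|` says `0 ≤ T 0`, so value iteration from
`0` is an increasing sequence lying below every nonnegative fixed point (Kleene). Increasing
sequences converge in `ℝⁿ` exactly when they are bounded, and a limit is a fixed point by
continuity of `T`.
-/

section KleeneIteration

variable {α : Type*} {f : α → α} {x₀ : α}

theorem Monotone.iterate_le_of_isFixedPt [Preorder α] (hf : Monotone f) {q : α} (hxq : x₀ ≤ q)
    (hq : IsFixedPt f q) (k : ℕ) : f^[k] x₀ ≤ q :=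
  (hf.iterate k hxq).trans_eq (hq.iterate k)

theorem Monotone.isLeast_of_tendsto_iterate [TopologicalSpace α] [PartialOrder α]
    [OrderClosedTopology α] (hf : Monotone f) (hfc : Continuous f) (hx : x₀ ≤ f x₀) {y : α}
    (hy : Tendsto (fun k => f^[k] x₀) atTop (𝓝 y)) :
    IsLeast {q | x₀ ≤ q ∧ IsFixedPt f q} y :=
  ⟨⟨(hf.monotone_iterate_of_le_map hx).ge_of_tendsto hy 0,
      isFixedPt_of_tendsto_iterate hy hfc.continuousAt⟩,
    fun _ ⟨hxq, hq⟩ => le_of_tendsto' hy (hf.iterate_le_of_isFixedPt hxq hq)⟩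

theorem Monotone.exists_tendsto_iterate_of_isFixedPt [TopologicalSpace α]
    [ConditionallyCompleteLattice α] [SupConvergenceClass α] (hf : Monotone f)
    (hx : x₀ ≤ f x₀) {q : α} (hxq : x₀ ≤ q) (hq : IsFixedPt f q) :
    ∃ y, Tendsto (fun k => f^[k] x₀) atTop (𝓝 y) :=
  ⟨_, tendsto_atTop_ciSup (hf.monotone_iterate_of_le_map hx)
    ⟨q, Set.forall_mem_range.2 (hf.iterate_le_of_isFixedPt hxq hq)⟩⟩

end KleeneIteration

section NonnegMatrix

variable {ι κ R : Type*} [Fintype κ] [CommRing R] [LinearOrder R] [IsStrictOrderedRing R]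

theorem Matrix.mulVec_le_mulVec_of_nonneg {M : Matrix ι κ R} (hM : ∀ i j, 0 ≤ M i j)
    {v w : κ → R} (hvw : v ≤ w) : M *ᵥ v ≤ M *ᵥ w :=
  fun i => dotProduct_le_dotProduct_of_nonneg_left hvw (hM i)

theorem Matrix.mulVec_le_mulVec_of_le {M N : Matrix ι κ R} (hMN : ∀ i j, M i j ≤ N i j)
    {v : κ → R} (hv : 0 ≤ v) : M *ᵥ v ≤ N *ᵥ v :=
  fun i => dotProduct_le_dotProduct_of_nonneg_right (hMN i) hv

theorem Matrix.abs_mulVec_le (M : Matrix ι κ R) (v : κ → R) : |M *ᵥ v| ≤ M.map abs *ᵥ |v| :=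
  fun i => (Finset.abs_sum_le_sum_abs _ _).trans_eq (by simp only [abs_mul]; rfl)

variable [Fintype ι]

theorem Matrix.mulVec_abs_add_mulVec_le {A : Matrix ι ι R} {B : Matrix ι κ R}
    {E : Matrix κ ι R} (hE : ∀ i j, 0 ≤ E i j) (hA : ∀ i j, (B.map abs * E) i j ≤ A i j)
    (r : κ → R) {p q : ι → R} (hpq : p ≤ q) :
    Eᵀ *ᵥ |r + Bᵀ *ᵥ q| ≤ Eᵀ *ᵥ |r + Bᵀ *ᵥ p| + Aᵀ *ᵥ (q - p) := by
  have hEt : ∀ i j, 0 ≤ Eᵀ i j := fun i j => hE j i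
  have hd : 0 ≤ q - p := sub_nonneg.2 hpq
  calc Eᵀ *ᵥ |r + Bᵀ *ᵥ q|
      ≤ Eᵀ *ᵥ (|r + Bᵀ *ᵥ p| + |Bᵀ *ᵥ (q - p)|) :=
        mulVec_le_mulVec_of_nonneg hEt <| by
          simpa [mulVec_sub] using abs_add_le (r + Bᵀ *ᵥ p) (Bᵀ *ᵥ q - Bᵀ *ᵥ p)
    _ ≤ Eᵀ *ᵥ (|r + Bᵀ *ᵥ p| + (B.map abs)ᵀ *ᵥ (q - p)) := by
        refine mulVec_le_mulVec_of_nonneg hEt (add_le_add_right ?_ _)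
        simpa [abs_of_nonneg hd, transpose_map] using abs_mulVec_le Bᵀ (q - p)
    _ = Eᵀ *ᵥ |r + Bᵀ *ᵥ p| + (B.map abs * E)ᵀ *ᵥ (q - p) := by
        rw [mulVec_add, mulVec_mulVec, transpose_mul]
    _ ≤ Eᵀ *ᵥ |r + Bᵀ *ᵥ p| + Aᵀ *ᵥ (q - p) :=
        add_le_add_right (mulVec_le_mulVec_of_le (fun i j => hA j i) hd) _

end NonnegMatrix

section Bellman

variable {n m : ℕ} (A : Matrix (Fin n) (Fin n) ℝ) (B : Matrix (Fin n) (Fin m) ℝ)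
  (E : Matrix (Fin m) (Fin n) ℝ) (s : Fin n → ℝ) (r : Fin m → ℝ)

theorem Tbell_def (p : Fin n → ℝ) : Tbell A B E s r p = s + Aᵀ *ᵥ p - Eᵀ *ᵥ |r + Bᵀ *ᵥ p| :=
  rfl

theorem monotone_Tbell (hE : ∀ i j, 0 ≤ E i j) (hA : ∀ i j, (B.map abs * E) i j ≤ A i j) :
    Monotone (Tbell A B E s r) := by
  intro p q hpq i
  have h := mulVec_abs_add_mulVec_le hE hA r hpq i
  simp only [Tbell_def, Pi.add_apply, Pi.sub_apply, mulVec_sub] at h ⊢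
  linarith

theorem continuous_Tbell : Continuous (Tbell A B E s r) := by
  unfold Tbell
  fun_prop

theorem zero_le_Tbell_zero (hs : Eᵀ *ᵥ |r| ≤ s) : 0 ≤ Tbell A B E s r 0 := by
  simpa [Tbell_def] using hs

end Bellman

/-- With `A ≥ |B|E`, `s ≥ Eᵀ|r|`, `p₀ = 0`, `p_{k+1} = T(p_k)`: the sequence
`(p_k)` converges iff `T` has a nonnegative fixed point; and any limit `p*` is the least
nonnegative fixed point of `T`. -/
theorem value_iteration_convergence {n m : ℕ}
    (A : Matrix (Fin n) (Fin n) ℝ) (B : Matrix (Fin n) (Fin m) ℝ)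
    (E : Matrix (Fin m) (Fin n) ℝ) (s : Fin n → ℝ) (r : Fin m → ℝ)
    (hE : ∀ i j, 0 ≤ E i j)
    (hA : ∀ i j, ((Matrix.of fun i j => |B i j|) * E) i j ≤ A i j)
    (hs : Eᵀ.mulVec (fun i => |r i|) ≤ s)
    (P : ℕ → Fin n → ℝ) (hP0 : P 0 = 0)
    (hPs : ∀ k, P (k + 1) = Tbell A B E s r (P k)) :
    ((∃ pstar : Fin n → ℝ, Tendsto P atTop (nhds pstar)) ↔
      (∃ q : Fin n → ℝ, 0 ≤ q ∧ Tbell A B E s r q = q)) ∧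
    (∀ pstar : Fin n → ℝ, Tendsto P atTop (nhds pstar) →
      Tbell A B E s r pstar = pstar ∧ 0 ≤ pstar ∧
        ∀ q : Fin n → ℝ, 0 ≤ q → Tbell A B E s r q = q → pstar ≤ q) := by
  have hmono := monotone_Tbell A B E s r hE hA
  have h0 := zero_le_Tbell_zero A B E s r hs
  obtain rfl : P = fun k => (Tbell A B E s r)^[k] 0 := by
    funext k
    induction k with
    | zero => exact hP0
    | succ k ih => rw [hPs, ih, iterate_succ_apply']
  have hleast {y} := hmono.isLeast_of_tendsto_iterate (continuous_Tbell A B E s r) h0 (y := y)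
  refine ⟨⟨fun ⟨y, hy⟩ => ⟨y, (hleast hy).1⟩,
    fun ⟨q, hq, hfix⟩ => hmono.exists_tendsto_iterate_of_isFixedPt h0 hq hfix⟩, fun y hy => ?_⟩
  obtain ⟨⟨h0y, hfix⟩, hlow⟩ := hleast hy
  exact ⟨hfix, h0y, fun q hq hqfix => hlow ⟨hq, hqfix⟩⟩
end

section
/- Let M ∈ ℝ^{n×n} have all entries nonnegative and suppose there exist p, q ∈ ℝⁿ with p > 0 and q > 0 entrywise such that Mᵀp ≤ p − q entrywise. Then for every x₀ ∈ ℝⁿ, the sequence Mᵗx₀ converges to 0 as t → ∞ (the positive linear system x(t+1) = Mx(t) is asymptotically stable). -/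
open Matrix Filter

/-- If `M` is entrywise nonnegative and there exist entrywise positive vectors
`p, q` with `Mᵀp ≤ p − q`, then `Mᵗx₀ → 0` for every `x₀` (the positive linear system
`x(t+1) = Mx(t)` is asymptotically stable). -/
theorem positive_system_stable {n : ℕ}
    (M : Matrix (Fin n) (Fin n) ℝ) (hM : ∀ i j, 0 ≤ M i j)
    (p q : Fin n → ℝ) (hp : ∀ i, 0 < p i) (hq : ∀ i, 0 < q i)
    (hLyap : Mᵀ.mulVec p ≤ p - q) :
    ∀ x₀ : Fin n → ℝ,
      Tendsto (fun t : ℕ => (M ^ t).mulVec x₀) atTop (nhds 0) := by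
  intro x₀
  rw [tendsto_pi_nhds]
  intro i
  have hne : (Finset.univ : Finset (Fin n)).Nonempty := ⟨i, Finset.mem_univ i⟩
  -- nonnegativity of powers
  have hMt : ∀ t, ∀ a b, 0 ≤ (M ^ t) a b := by
    intro t
    induction t with
    | zero => intro a b; simp [Matrix.one_apply]; positivity
    | succ t ih =>
        intro a b
        rw [pow_succ]
        simp only [Matrix.mul_apply]
        exact Finset.sum_nonneg fun k _ => mul_nonneg (ih a k) (hM k b)
  set y : Fin n → ℝ := fun j => |x₀ j| with hy
  have hyt : ∀ t j, 0 ≤ ((M ^ t).mulVec y) j := by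
    intro t j
    simp only [Matrix.mulVec, dotProduct]
    exact Finset.sum_nonneg fun k _ => mul_nonneg (hMt t j k) (abs_nonneg _)
  have key : ∀ t j, |((M ^ t).mulVec x₀) j| ≤ ((M ^ t).mulVec y) j := by
    intro t j
    simp only [Matrix.mulVec, dotProduct]
    calc |∑ k, (M ^ t) j k * x₀ k| ≤ ∑ k, |(M ^ t) j k * x₀ k| :=
          Finset.abs_sum_le_sum_abs _ _
      _ = ∑ k, (M ^ t) j k * y k := by
          refine Finset.sum_congr rfl fun k _ => ?_
          rw [abs_mul, abs_of_nonneg (hMt t j k)]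
  -- the contraction factor
  set c : ℝ := Finset.univ.inf' hne (fun j => q j / p j) with hc
  have hcpos : 0 < c := by
    rw [hc]
    rw [Finset.lt_inf'_iff]
    intro j _
    exact div_pos (hq j) (hp j)
  have hqc : ∀ j, c * p j ≤ q j := by
    intro j
    have := Finset.inf'_le (fun j => q j / p j) (Finset.mem_univ j)
    calc c * p j ≤ (q j / p j) * p j := by
          exact mul_le_mul_of_nonneg_right this (hp j).le
      _ = q j := by rw [div_mul_cancel₀ _ (hp j).ne']
  set r : ℝ := max (1 - c) 0 with hr
  have hr0 : 0 ≤ r := le_max_right _ _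
  have hr1 : r < 1 := by
    rw [hr, max_lt_iff]
    constructor <;> linarith
  set φ : ℕ → ℝ := fun t => ∑ j, p j * ((M ^ t).mulVec y) j with hφ
  have hφ0 : ∀ t, 0 ≤ φ t := fun t =>
    Finset.sum_nonneg fun j _ => mul_nonneg (hp j).le (hyt t j)
  have hstep : ∀ t, φ (t + 1) ≤ r * φ t := by
    intro t
    set z : Fin n → ℝ := (M ^ t).mulVec y with hzdef
    have hz2 : (M ^ (t + 1)).mulVec y = M.mulVec z := by
      rw [hzdef, Matrix.mulVec_mulVec, ← pow_succ']
    have hrw : φ (t + 1) = ∑ k, (Mᵀ.mulVec p) k * z k := by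
      simp only [hφ]
      rw [hz2]
      simp only [Matrix.mulVec, dotProduct, Matrix.transpose_apply,
        Finset.mul_sum, Finset.sum_mul]
      rw [Finset.sum_comm]
      refine Finset.sum_congr rfl fun k _ => Finset.sum_congr rfl fun j _ => ?_
      ring
    rw [hrw]
    calc ∑ k, (Mᵀ.mulVec p) k * z k
        ≤ ∑ k, ((1 - c) * p k) * z k := by
          refine Finset.sum_le_sum fun k _ => ?_
          refine mul_le_mul_of_nonneg_right ?_ (hyt t k)
          have h1 := hLyap k
          have h2 := hqc k
          simp only [Pi.sub_apply] at h1
          linarith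
      _ = (1 - c) * φ t := by
          rw [hφ, Finset.mul_sum]
          refine Finset.sum_congr rfl fun k _ => ?_
          ring
      _ ≤ r * φ t := mul_le_mul_of_nonneg_right (le_max_left _ _) (hφ0 t)
  have hgeom : ∀ t, φ t ≤ r ^ t * φ 0 := by
    intro t
    induction t with
    | zero => simp
    | succ t ih =>
        calc φ (t + 1) ≤ r * φ t := hstep t
          _ ≤ r * (r ^ t * φ 0) := mul_le_mul_of_nonneg_left ih hr0
          _ = r ^ (t + 1) * φ 0 := by ring
  -- conclude
  have hbound : ∀ t, |((M ^ t).mulVec x₀) i| ≤ (p i)⁻¹ * (r ^ t * φ 0) := by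
    intro t
    have h1 : p i * ((M ^ t).mulVec y) i ≤ φ t := by
      refine Finset.single_le_sum (f := fun j => p j * ((M ^ t).mulVec y) j)
        (fun j _ => mul_nonneg (hp j).le (hyt t j)) (Finset.mem_univ i)
    have h2 : ((M ^ t).mulVec y) i ≤ (p i)⁻¹ * φ t := by
      rw [le_inv_mul_iff₀ (hp i)]
      linarith
    calc |((M ^ t).mulVec x₀) i| ≤ ((M ^ t).mulVec y) i := key t i
      _ ≤ (p i)⁻¹ * φ t := h2
      _ ≤ (p i)⁻¹ * (r ^ t * φ 0) :=
          mul_le_mul_of_nonneg_left (hgeom t) (inv_nonneg.2 (hp i).le)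
  have hlim : Tendsto (fun t : ℕ => (p i)⁻¹ * (r ^ t * φ 0)) atTop (nhds 0) := by
    have := tendsto_pow_atTop_nhds_zero_of_lt_one hr0 hr1
    have := ((this.mul_const (φ 0)).const_mul ((p i)⁻¹))
    simpa using this
  have : Tendsto (fun t : ℕ => ((M ^ t).mulVec x₀) i) atTop (nhds 0) := by
    refine squeeze_zero_norm (fun t => ?_) hlim
    simpa [Real.norm_eq_abs] using hbound t
  simpa using this
end

section
/- Let p ∈ ℝⁿ with p ≥ 0 satisfy T(p) ≤ p entrywise, and suppose γ ≥ Fᵀp entrywise. Consider the closed-loop trajectory x(0) = x₀ ≥ 0, u(t) = −K(p)x(t), x(t+1) = (A − B·K(p))x(t) + Fw(t), where w(t) ≥ 0 for all t and all entries of F are nonnegative. Then for every horizon N, Σ_{t=0}^{N} [sᵀx(t) + rᵀu(t) − γᵀw(t)] ≤ pᵀx₀ − pᵀx(N+1) ≤ pᵀx₀. -/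
open Matrix

lemma sign_mul_self' (x : ℝ) : Real.sign x * x = |x| := by
  rcases lt_trichotomy x 0 with h | h | h
  · rw [Real.sign_of_neg h, abs_of_neg h]; ring
  · simp [h]
  · rw [Real.sign_of_pos h, abs_of_pos h]; ring

lemma abs_sign_le_one' (x : ℝ) : |Real.sign x| ≤ 1 := by
  rcases lt_trichotomy x 0 with h | h | h
  · rw [Real.sign_of_neg h]; norm_num
  · simp [h]
  · rw [Real.sign_of_pos h]; norm_num

lemma dot_le_dot' {n : ℕ} {u v x : Fin n → ℝ} (hx : 0 ≤ x) (h : u ≤ v) :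
    u ⬝ᵥ x ≤ v ⬝ᵥ x :=
  Finset.sum_le_sum fun j _ => mul_le_mul_of_nonneg_right (h j) (hx j)

/-- If `p ≥ 0`, `T(p) ≤ p`, and `γ ≥ Fᵀp`, then along the closed-loop
trajectory `x(0) = x₀ ≥ 0`, `u(t) = −K(p)x(t)`, `x(t+1) = (A − B·K(p))x(t) + Fw(t)` with
`w(t) ≥ 0`, the partial costs satisfy
`Σ_{t=0}^{N} [sᵀx(t) + rᵀu(t) − γᵀw(t)] ≤ pᵀx₀ − pᵀx(N+1) ≤ pᵀx₀`. -/
theorem closed_loop_upper_bound {n m l : ℕ}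
    (A : Matrix (Fin n) (Fin n) ℝ) (B : Matrix (Fin n) (Fin m) ℝ)
    (F : Matrix (Fin n) (Fin l) ℝ) (E : Matrix (Fin m) (Fin n) ℝ)
    (s : Fin n → ℝ) (r : Fin m → ℝ) (γ : Fin l → ℝ)
    (hF : ∀ i j, 0 ≤ F i j)
    (hE : ∀ i j, 0 ≤ E i j)
    (hA : ∀ i j, ((Matrix.of fun i j => |B i j|) * E) i j ≤ A i j)
    (p : Fin n → ℝ) (hp : 0 ≤ p) (hT : Tbell A B E s r p ≤ p)
    (hγ : Fᵀ.mulVec p ≤ γ)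
    (x₀ : Fin n → ℝ) (hx₀ : 0 ≤ x₀)
    (x : ℕ → Fin n → ℝ) (w : ℕ → Fin l → ℝ)
    (hx0 : x 0 = x₀) (hw : ∀ t, 0 ≤ w t)
    (hdyn : ∀ t, x (t + 1) = (A - B * Kgain B E r p).mulVec (x t) + F.mulVec (w t)) :
    ∀ N : ℕ,
      (∑ t ∈ Finset.range (N + 1),
          (s ⬝ᵥ x t + r ⬝ᵥ (-(Kgain B E r p).mulVec (x t)) - γ ⬝ᵥ w t))
        ≤ p ⬝ᵥ x₀ - p ⬝ᵥ x (N + 1) ∧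
      p ⬝ᵥ x₀ - p ⬝ᵥ x (N + 1) ≤ p ⬝ᵥ x₀ := by
  set K := Kgain B E r p with hK
  set c : Fin m → ℝ := r + Bᵀ.mulVec p with hc
  -- closed-loop matrix is entrywise nonnegative
  have hM : ∀ i j, 0 ≤ (A - B * K) i j := by
    intro i j
    have h1 : (B * K) i j ≤ ((Matrix.of fun i j => |B i j|) * E) i j := by
      simp only [Matrix.mul_apply, hK, Kgain, Matrix.of_apply]
      apply Finset.sum_le_sum
      intro k _
      have : B i k * (Real.sign (c k) * E k j) = (B i k * Real.sign (c k)) * E k j := by ring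
      rw [this]
      apply mul_le_mul_of_nonneg_right _ (hE k j)
      calc B i k * Real.sign (c k) ≤ |B i k * Real.sign (c k)| := le_abs_self _
        _ = |B i k| * |Real.sign (c k)| := abs_mul _ _
        _ ≤ |B i k| * 1 := mul_le_mul_of_nonneg_left (abs_sign_le_one' _) (abs_nonneg _)
        _ = |B i k| := mul_one _
    have := hA i j
    simp only [Matrix.sub_apply]
    linarith
  -- states stay nonnegative
  have hxnn : ∀ t, 0 ≤ x t := by
    intro t
    induction t with
    | zero => rw [hx0]; exact hx₀
    | succ t ih =>
      rw [hdyn t]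
      intro j
      simp only [Pi.add_apply, Pi.zero_apply, Matrix.mulVec, dotProduct]
      apply add_nonneg
      · exact Finset.sum_nonneg fun k _ => mul_nonneg (hM j k) (ih k)
      · exact Finset.sum_nonneg fun k _ => mul_nonneg (hF j k) (hw t k)
  -- key identity: Kᵀ (r + Bᵀ p) = Eᵀ |r + Bᵀ p|
  have hKid : Kᵀ.mulVec c = Eᵀ.mulVec (fun i => |c i|) := by
    funext j
    simp only [Matrix.mulVec, dotProduct, Matrix.transpose_apply, hK, Kgain, Matrix.of_apply]
    apply Finset.sum_congr rfl
    intro i _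
    calc Real.sign (c i) * E i j * c i = E i j * (Real.sign (c i) * c i) := by ring
      _ = E i j * |c i| := by rw [sign_mul_self' (c i)]
  -- the vector inequality coming from `T(p) ≤ p`
  have hvec : s - Kᵀ.mulVec r + (A - B * K)ᵀ.mulVec p ≤ p := by
    have heq : s - Kᵀ.mulVec r + (A - B * K)ᵀ.mulVec p = Tbell A B E s r p := by
      rw [Tbell, Matrix.transpose_sub, Matrix.transpose_mul, Matrix.sub_mulVec,
        ← Matrix.mulVec_mulVec, ← hKid, hc, Matrix.mulVec_add]
      funext j
      simp only [Pi.add_apply, Pi.sub_apply]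
      ring
    rw [heq]; exact hT
  -- per-step cost bound
  have hstep : ∀ t, s ⬝ᵥ x t + r ⬝ᵥ (-(K.mulVec (x t))) - γ ⬝ᵥ w t
      ≤ p ⬝ᵥ x t - p ⬝ᵥ x (t + 1) := by
    intro t
    have h1 : p ⬝ᵥ x (t + 1)
        = (A - B * K)ᵀ.mulVec p ⬝ᵥ x t + Fᵀ.mulVec p ⬝ᵥ w t := by
      rw [hdyn t, dotProduct_add, Matrix.dotProduct_mulVec, Matrix.dotProduct_mulVec,
        ← Matrix.mulVec_transpose, ← Matrix.mulVec_transpose]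
    have h2 : r ⬝ᵥ (-(K.mulVec (x t))) = -(Kᵀ.mulVec r ⬝ᵥ x t) := by
      rw [dotProduct_neg, Matrix.dotProduct_mulVec, ← Matrix.mulVec_transpose]
    have h3 : (s - Kᵀ.mulVec r + (A - B * K)ᵀ.mulVec p) ⬝ᵥ x t ≤ p ⬝ᵥ x t :=
      dot_le_dot' (hxnn t) hvec
    have h4 : Fᵀ.mulVec p ⬝ᵥ w t ≤ γ ⬝ᵥ w t := dot_le_dot' (hw t) hγ
    rw [add_dotProduct, sub_dotProduct] at h3
    rw [h1, h2]
    linarith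
  intro N
  constructor
  · have htel : ∑ t ∈ Finset.range (N + 1), (p ⬝ᵥ x t - p ⬝ᵥ x (t + 1))
        = p ⬝ᵥ x 0 - p ⬝ᵥ x (N + 1) := Finset.sum_range_sub' (fun t => p ⬝ᵥ x t) (N + 1)
    rw [hx0] at htel
    calc (∑ t ∈ Finset.range (N + 1),
          (s ⬝ᵥ x t + r ⬝ᵥ (-(K.mulVec (x t))) - γ ⬝ᵥ w t))
        ≤ ∑ t ∈ Finset.range (N + 1), (p ⬝ᵥ x t - p ⬝ᵥ x (t + 1)) :=
          Finset.sum_le_sum fun t _ => hstep t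
      _ = p ⬝ᵥ x₀ - p ⬝ᵥ x (N + 1) := htel
  · have : 0 ≤ p ⬝ᵥ x (N + 1) :=
      Finset.sum_nonneg fun j _ => mul_nonneg (hp j) (hxnn (N + 1) j)
    linarith
end

section
/- Let p ∈ ℝⁿ with p ≥ 0 satisfy p ≤ T(p) entrywise. Consider any trajectory with x(0) = x₀ ≥ 0, x(t+1) = Ax(t) + Bu(t) + Fw(t), where |u(t)| ≤ Ex(t) and w(t) ≥ 0 for all t. Then for every horizon N, Σ_{t=0}^{N} [sᵀx(t) + rᵀu(t) − γᵀw(t)] ≥ pᵀx₀ − pᵀx(N+1) + Σ_{t=0}^{N} (Fᵀp − γ)ᵀw(t). -/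
open Matrix

/-- If `p ≥ 0` and `p ≤ T(p)`, then along any admissible trajectory
`x(0) = x₀ ≥ 0`, `x(t+1) = Ax(t) + Bu(t) + Fw(t)` with `|u(t)| ≤ Ex(t)` and `w(t) ≥ 0`,
`Σ_{t=0}^{N} [sᵀx(t) + rᵀu(t) − γᵀw(t)] ≥ pᵀx₀ − pᵀx(N+1) + Σ_{t=0}^{N} (Fᵀp − γ)ᵀw(t)`. -/
theorem trajectory_lower_bound {n m l : ℕ}
    (A : Matrix (Fin n) (Fin n) ℝ) (B : Matrix (Fin n) (Fin m) ℝ)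
    (F : Matrix (Fin n) (Fin l) ℝ) (E : Matrix (Fin m) (Fin n) ℝ)
    (s : Fin n → ℝ) (r : Fin m → ℝ) (γ : Fin l → ℝ)
    (hF : ∀ i j, 0 ≤ F i j)
    (hE : ∀ i j, 0 ≤ E i j)
    (hA : ∀ i j, ((Matrix.of fun i j => |B i j|) * E) i j ≤ A i j)
    (p : Fin n → ℝ) (hp : 0 ≤ p) (hT : p ≤ Tbell A B E s r p)
    (x₀ : Fin n → ℝ) (hx₀ : 0 ≤ x₀)
    (x : ℕ → Fin n → ℝ) (u : ℕ → Fin m → ℝ) (w : ℕ → Fin l → ℝ)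
    (hx0 : x 0 = x₀)
    (hu : ∀ t i, |u t i| ≤ E.mulVec (x t) i) (hw : ∀ t, 0 ≤ w t)
    (hdyn : ∀ t, x (t + 1) = A.mulVec (x t) + B.mulVec (u t) + F.mulVec (w t)) :
    ∀ N : ℕ,
      p ⬝ᵥ x₀ - p ⬝ᵥ x (N + 1) +
          ∑ t ∈ Finset.range (N + 1), (Fᵀ.mulVec p - γ) ⬝ᵥ w t
        ≤ ∑ t ∈ Finset.range (N + 1), (s ⬝ᵥ x t + r ⬝ᵥ u t - γ ⬝ᵥ w t) := by
  -- nonnegativity of the state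
  have xnn : ∀ t, 0 ≤ x t := by
    intro t
    induction t with
    | zero => rw [hx0]; exact hx₀
    | succ t ih =>
      rw [hdyn t]
      intro i
      have hEx : ∀ j, 0 ≤ E.mulVec (x t) j := by
        intro j; exact le_trans (abs_nonneg _) (hu t j)
      have hBu : |B.mulVec (u t) i| ≤ ((Matrix.of fun i j => |B i j|) * E).mulVec (x t) i := by
        rw [← Matrix.mulVec_mulVec]
        calc |B.mulVec (u t) i| ≤ ∑ j, |B i j| * |u t j| := by
              rw [Matrix.mulVec]
              refine le_trans (Finset.abs_sum_le_sum_abs _ _) ?_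
              apply le_of_eq; apply Finset.sum_congr rfl
              intro j _; simp [dotProduct, abs_mul]
          _ ≤ ∑ j, |B i j| * E.mulVec (x t) j := by
              apply Finset.sum_le_sum; intro j _
              exact mul_le_mul_of_nonneg_left (hu t j) (abs_nonneg _)
          _ = (Matrix.of fun i j => |B i j|).mulVec (E.mulVec (x t)) i := by
              simp [Matrix.mulVec, dotProduct]
      have hAx : ((Matrix.of fun i j => |B i j|) * E).mulVec (x t) i ≤ A.mulVec (x t) i := by
        simp only [Matrix.mulVec, dotProduct]
        apply Finset.sum_le_sum; intro j _
        exact mul_le_mul_of_nonneg_right (hA i j) (ih j)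
      have hFw : 0 ≤ F.mulVec (w t) i := by
        simp only [Matrix.mulVec, dotProduct]
        apply Finset.sum_nonneg; intro j _
        exact mul_nonneg (hF i j) (hw t j)
      have := neg_abs_le (B.mulVec (u t) i)
      simp only [Pi.add_apply, Pi.zero_apply]
      linarith
  -- one-step inequality
  have step : ∀ t, p ⬝ᵥ x t - p ⬝ᵥ x (t + 1) + (Fᵀ.mulVec p - γ) ⬝ᵥ w t
      ≤ s ⬝ᵥ x t + r ⬝ᵥ u t - γ ⬝ᵥ w t := by
    intro t
    set q : Fin m → ℝ := fun j => |(r + Bᵀ.mulVec p) j| with hq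
    have e1 : p ⬝ᵥ x (t + 1)
        = Aᵀ.mulVec p ⬝ᵥ x t + Bᵀ.mulVec p ⬝ᵥ u t + Fᵀ.mulVec p ⬝ᵥ w t := by
      rw [hdyn t]
      simp [dotProduct_add, Matrix.dotProduct_mulVec, Matrix.mulVec_transpose]
    have e2 : p ⬝ᵥ x t ≤ s ⬝ᵥ x t + Aᵀ.mulVec p ⬝ᵥ x t - Eᵀ.mulVec q ⬝ᵥ x t := by
      have h1 : p ⬝ᵥ x t ≤ Tbell A B E s r p ⬝ᵥ x t := by
        simp only [dotProduct]
        apply Finset.sum_le_sum; intro i _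
        exact mul_le_mul_of_nonneg_right (hT i) (xnn t i)
      calc p ⬝ᵥ x t ≤ Tbell A B E s r p ⬝ᵥ x t := h1
        _ = s ⬝ᵥ x t + Aᵀ.mulVec p ⬝ᵥ x t - Eᵀ.mulVec q ⬝ᵥ x t := by
            rw [Tbell, sub_dotProduct, add_dotProduct]
    have e3 : Eᵀ.mulVec q ⬝ᵥ x t = q ⬝ᵥ E.mulVec (x t) := by
      rw [Matrix.dotProduct_mulVec, Matrix.mulVec_transpose]
    have e4 : -(q ⬝ᵥ E.mulVec (x t)) ≤ (r + Bᵀ.mulVec p) ⬝ᵥ u t := by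
      rw [dotProduct, dotProduct, ← Finset.sum_neg_distrib]
      apply Finset.sum_le_sum; intro j _
      have h2 : |(r + Bᵀ.mulVec p) j * u t j| ≤ q j * E.mulVec (x t) j := by
        rw [abs_mul]
        exact mul_le_mul_of_nonneg_left (hu t j) (abs_nonneg _)
      have := neg_abs_le ((r + Bᵀ.mulVec p) j * u t j)
      linarith
    have e5 : (r + Bᵀ.mulVec p) ⬝ᵥ u t = r ⬝ᵥ u t + Bᵀ.mulVec p ⬝ᵥ u t := by
      rw [add_dotProduct]
    have e6 : (Fᵀ.mulVec p - γ) ⬝ᵥ w t = Fᵀ.mulVec p ⬝ᵥ w t - γ ⬝ᵥ w t := by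
      rw [sub_dotProduct]
    rw [e1, e6]
    linarith
  intro N
  induction N with
  | zero =>
    simp only [Finset.sum_range_succ, Finset.sum_range_zero, zero_add]
    have := step 0
    rw [hx0] at this
    rw [hx0]
    norm_num at this ⊢
    linarith
  | succ N ih =>
    simp only [Finset.sum_range_succ] at ih ⊢
    have := step (N + 1)
    linarith
end

section
/- Suppose A ≥ |B|E and s > Eᵀ|r| entrywise, and let p ∈ ℝⁿ with p ≥ 0 satisfy p ≤ T(p). Consider any disturbance-free admissible trajectory: x(0) = x₀ ≥ 0, x(t+1) = Ax(t) + Bu(t), |u(t)| ≤ Ex(t) for all t. Then the (nondecreasing) partial sums satisfy sup over N of Σ_{t=0}^{N} [sᵀx(t) + rᵀu(t)] ≥ pᵀx₀; that is, every admissible control incurs total cost at least pᵀx₀. -/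
open Matrix

/-- helper: lower bound for a dot product against a vector bounded in absolute value. -/
lemma dot_lower {m : ℕ} (v u w : Fin m → ℝ) (h : ∀ k, |u k| ≤ w k) :
    -((fun k => |v k|) ⬝ᵥ w) ≤ v ⬝ᵥ u := by
  rw [dotProduct, dotProduct, ← Finset.sum_neg_distrib]
  apply Finset.sum_le_sum
  intro k _
  have h1 : -(|v k| * |u k|) ≤ v k * u k := neg_abs_le (v k * u k) |>.trans_eq' (by rw [abs_mul])
  have h2 : |v k| * |u k| ≤ |v k| * w k := mul_le_mul_of_nonneg_left (h k) (abs_nonneg _)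
  linarith

/-- If `A ≥ |B|E`, `s > Eᵀ|r|` entrywise, `p ≥ 0` and `p ≤ T(p)`, then along
any disturbance-free admissible trajectory `x(0) = x₀ ≥ 0`, `x(t+1) = Ax(t) + Bu(t)`,
`|u(t)| ≤ Ex(t)`, the supremum over `N` of the (nondecreasing) partial sums
`Σ_{t=0}^{N} [sᵀx(t) + rᵀu(t)]` is at least `pᵀx₀`, i.e. every upper bound `c` of the
partial sums satisfies `pᵀx₀ ≤ c`. -/
theorem admissible_cost_lower_bound {n m : ℕ}
    (A : Matrix (Fin n) (Fin n) ℝ) (B : Matrix (Fin n) (Fin m) ℝ)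
    (E : Matrix (Fin m) (Fin n) ℝ) (s : Fin n → ℝ) (r : Fin m → ℝ)
    (hE : ∀ i j, 0 ≤ E i j)
    (hA : ∀ i j, ((Matrix.of fun i j => |B i j|) * E) i j ≤ A i j)
    (hs : ∀ j, Eᵀ.mulVec (fun i => |r i|) j < s j)
    (p : Fin n → ℝ) (hp : 0 ≤ p) (hT : p ≤ Tbell A B E s r p)
    (x₀ : Fin n → ℝ) (hx₀ : 0 ≤ x₀)
    (x : ℕ → Fin n → ℝ) (u : ℕ → Fin m → ℝ)
    (hx0 : x 0 = x₀)
    (hu : ∀ t i, |u t i| ≤ E.mulVec (x t) i)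
    (hdyn : ∀ t, x (t + 1) = A.mulVec (x t) + B.mulVec (u t)) :
    ∀ c : ℝ,
      (∀ N : ℕ, ∑ t ∈ Finset.range (N + 1), (s ⬝ᵥ x t + r ⬝ᵥ u t) ≤ c) →
      p ⬝ᵥ x₀ ≤ c := by
  intro c hc
  set d : Fin n → ℝ := fun j => s j - Eᵀ.mulVec (fun i => |r i|) j with hd_def
  have hd : ∀ j, 0 < d j := fun j => sub_pos.mpr (hs j)
  -- trajectory stays nonnegative
  have hxnn : ∀ t j, 0 ≤ x t j := by
    intro t
    induction t with
    | zero => intro j; rw [hx0]; exact hx₀ j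
    | succ t ih =>
      intro i
      rw [hdyn t]
      have hBu : -((fun k => |B i k|) ⬝ᵥ E.mulVec (x t)) ≤ (B i) ⬝ᵥ u t :=
        dot_lower (B i) (u t) (E.mulVec (x t)) (hu t)
      have hABE : ((Matrix.of fun i j => |B i j|) * E).mulVec (x t) i ≤ A.mulVec (x t) i := by
        simp only [Matrix.mulVec, dotProduct]
        apply Finset.sum_le_sum
        intro j _
        exact mul_le_mul_of_nonneg_right (hA i j) (ih j)
      have hrw : ((Matrix.of fun i j => |B i j|) * E).mulVec (x t) i
          = (fun k => |B i k|) ⬝ᵥ E.mulVec (x t) := by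
        rw [← Matrix.mulVec_mulVec]
        rfl
      have : 0 ≤ A.mulVec (x t) i + B.mulVec (u t) i := by
        have : (B i) ⬝ᵥ u t = B.mulVec (u t) i := rfl
        rw [← this]
        rw [hrw] at hABE
        linarith
      simpa using this
  -- stage cost dominates d ⬝ᵥ x t
  have hcost : ∀ t, d ⬝ᵥ x t ≤ s ⬝ᵥ x t + r ⬝ᵥ u t := by
    intro t
    have h1 : -((fun k => |r k|) ⬝ᵥ E.mulVec (x t)) ≤ r ⬝ᵥ u t :=
      dot_lower r (u t) (E.mulVec (x t)) (hu t)
    have h2 : (Eᵀ.mulVec fun i => |r i|) ⬝ᵥ x t = (fun k => |r k|) ⬝ᵥ E.mulVec (x t) := by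
      rw [Matrix.mulVec_transpose, ← Matrix.dotProduct_mulVec]
    have h3 : d ⬝ᵥ x t = s ⬝ᵥ x t - (Eᵀ.mulVec fun i => |r i|) ⬝ᵥ x t := by
      rw [hd_def]
      simp [dotProduct, sub_mul, Finset.sum_sub_distrib]
    rw [h3, h2]
    linarith
  -- d ⬝ᵥ x t nonnegative
  have hdxnn : ∀ t, 0 ≤ d ⬝ᵥ x t := by
    intro t
    apply Finset.sum_nonneg
    intro j _
    exact mul_nonneg (hd j).le (hxnn t j)
  -- one-step inequality
  have hstep : ∀ t, p ⬝ᵥ x t ≤ (s ⬝ᵥ x t + r ⬝ᵥ u t) + p ⬝ᵥ x (t + 1) := by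
    intro t
    set q : Fin m → ℝ := fun i => |(r + Bᵀ.mulVec p) i| with hq_def
    have hT' : ∀ j, p j ≤ s j + Aᵀ.mulVec p j - Eᵀ.mulVec q j := by
      intro j
      have := hT j
      simpa [Tbell, hq_def] using this
    have h1 : p ⬝ᵥ x t ≤ (fun j => s j + Aᵀ.mulVec p j - Eᵀ.mulVec q j) ⬝ᵥ x t := by
      apply Finset.sum_le_sum
      intro j _
      exact mul_le_mul_of_nonneg_right (hT' j) (hxnn t j)
    have h2 : (fun j => s j + Aᵀ.mulVec p j - Eᵀ.mulVec q j) ⬝ᵥ x t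
        = s ⬝ᵥ x t + (Aᵀ.mulVec p) ⬝ᵥ x t - (Eᵀ.mulVec q) ⬝ᵥ x t := by
      simp [dotProduct, add_mul, sub_mul, Finset.sum_add_distrib, Finset.sum_sub_distrib]
    have h3 : (Eᵀ.mulVec q) ⬝ᵥ x t = q ⬝ᵥ E.mulVec (x t) := by
      rw [Matrix.mulVec_transpose, ← Matrix.dotProduct_mulVec]
    have h4 : -(q ⬝ᵥ E.mulVec (x t)) ≤ (r + Bᵀ.mulVec p) ⬝ᵥ u t :=
      dot_lower _ (u t) (E.mulVec (x t)) (hu t)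
    have h5 : (r + Bᵀ.mulVec p) ⬝ᵥ u t = r ⬝ᵥ u t + (Bᵀ.mulVec p) ⬝ᵥ u t := by
      simp [dotProduct, add_mul, Finset.sum_add_distrib]
    have h6 : p ⬝ᵥ x (t + 1) = (Aᵀ.mulVec p) ⬝ᵥ x t + (Bᵀ.mulVec p) ⬝ᵥ u t := by
      rw [hdyn t, Matrix.mulVec_transpose, Matrix.mulVec_transpose,
        ← Matrix.dotProduct_mulVec, ← Matrix.dotProduct_mulVec, dotProduct_add]
    rw [h2, h3] at h1
    rw [h5] at h4
    rw [h6]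
    linarith
  -- K such that p ≤ K • d
  set K : ℝ := ∑ j, p j / d j with hK_def
  have hK0 : 0 ≤ K := Finset.sum_nonneg fun j _ => div_nonneg (hp j) (hd j).le
  have hpK : ∀ j, p j ≤ K * d j := by
    intro j
    have h1 : p j / d j ≤ K := by
      apply Finset.single_le_sum (f := fun j => p j / d j)
        (fun i _ => div_nonneg (hp i) (hd i).le) (Finset.mem_univ j)
    calc p j = (p j / d j) * d j := (div_mul_cancel₀ (p j) (hd j).ne').symm
    _ ≤ K * d j := mul_le_mul_of_nonneg_right h1 (hd j).le
  have hpx : ∀ t, p ⬝ᵥ x t ≤ K * (d ⬝ᵥ x t) := by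
    intro t
    rw [dotProduct, dotProduct, Finset.mul_sum]
    apply Finset.sum_le_sum
    intro j _
    rw [← mul_assoc]
    exact mul_le_mul_of_nonneg_right (hpK j) (hxnn t j)
  -- telescoping
  set S : ℕ → ℝ := fun N => ∑ t ∈ Finset.range (N + 1), (s ⬝ᵥ x t + r ⬝ᵥ u t) with hS_def
  have htel : ∀ N, p ⬝ᵥ x 0 ≤ S N + p ⬝ᵥ x (N + 1) := by
    intro N
    induction N with
    | zero => simpa [hS_def] using hstep 0
    | succ N ih =>
      have h1 := hstep (N + 1)
      have h2 : S (N + 1) = S N + (s ⬝ᵥ x (N + 1) + r ⬝ᵥ u (N + 1)) := by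
        rw [hS_def]
        exact Finset.sum_range_succ _ _
      rw [h2]
      linarith
  have hkey : ∀ N, p ⬝ᵥ x₀ ≤ S N + K * (s ⬝ᵥ x (N + 1) + r ⬝ᵥ u (N + 1)) := by
    intro N
    have h1 := htel N
    have h2 := (hpx (N + 1)).trans (mul_le_mul_of_nonneg_left (hcost (N + 1)) hK0)
    rw [hx0] at h1
    linarith
  -- limit argument
  have hmono : Monotone S := by
    apply monotone_nat_of_le_succ
    intro N
    rw [hS_def]
    simp only [Finset.sum_range_succ (n := N + 1)]
    have := (hdxnn (N + 1)).trans (hcost (N + 1))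
    linarith
  have hbdd : BddAbove (Set.range S) := ⟨c, by rintro _ ⟨N, rfl⟩; exact hc N⟩
  have hlim : Filter.Tendsto S Filter.atTop (nhds (⨆ N, S N)) :=
    tendsto_atTop_ciSup hmono hbdd
  have hL : (⨆ N, S N) ≤ c := ciSup_le hc
  have hlim2 : Filter.Tendsto (fun N => S (N + 1)) Filter.atTop (nhds (⨆ N, S N)) :=
    hlim.comp (Filter.tendsto_add_atTop_nat 1)
  have hclim : Filter.Tendsto (fun N => s ⬝ᵥ x (N + 1) + r ⬝ᵥ u (N + 1)) Filter.atTop (nhds 0) := by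
    have : Filter.Tendsto (fun N => S (N + 1) - S N) Filter.atTop (nhds ((⨆ N, S N) - ⨆ N, S N)) :=
      hlim2.sub hlim
    rw [sub_self] at this
    apply this.congr
    intro N
    rw [hS_def]
    simp [Finset.sum_range_succ (n := N + 1)]
  have hfinal : Filter.Tendsto (fun N => S N + K * (s ⬝ᵥ x (N + 1) + r ⬝ᵥ u (N + 1)))
      Filter.atTop (nhds ((⨆ N, S N) + K * 0)) := hlim.add (hclim.const_mul K)
  have := ge_of_tendsto hfinal (Filter.Eventually.of_forall hkey)
  rw [mul_zero, add_zero] at this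
  exact this.trans hL
end

section
/- Suppose A ≥ |B|E and s > Eᵀ|r| entrywise, all entries of F are nonnegative, and let p ∈ ℝⁿ with p ≥ 0 satisfy p ≤ T(p). Suppose γⱼ < (Fᵀp)ⱼ for some index j. Fix α ≥ 0 and the disturbance w(0) = α·eⱼ (the j-th standard basis vector scaled by α), w(t) = 0 for t ≥ 1. Then every admissible trajectory x(0) = x₀ ≥ 0, x(t+1) = Ax(t) + Bu(t) + Fw(t), |u(t)| ≤ Ex(t), satisfies limsup over N of Σ_{t=0}^{N} [sᵀx(t) + rᵀu(t) − γᵀw(t)] ≥ pᵀx₀ + α·((Fᵀp)ⱼ − γⱼ). In particular, since α is arbitrary, the worst-case cost over nonnegative disturbances is +∞ for every control policy. -/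
open Matrix Filter

/-- Suppose `A ≥ |B|E`, `s > Eᵀ|r|`, `F ≥ 0`, `p ≥ 0` with `p ≤ T(p)`, and
`γⱼ < (Fᵀp)ⱼ` for some `j`. Fix `α ≥ 0` and the disturbance `w(0) = α·eⱼ`, `w(t) = 0` for
`t ≥ 1`. Then every admissible trajectory `x(0) = x₀ ≥ 0`,
`x(t+1) = Ax(t) + Bu(t) + Fw(t)`, `|u(t)| ≤ Ex(t)` satisfies
`limsup_N Σ_{t=0}^{N} [sᵀx(t) + rᵀu(t) − γᵀw(t)] ≥ pᵀx₀ + α·((Fᵀp)ⱼ − γⱼ)`, stated as: for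
every `ε > 0`, the partial sums frequently exceed `pᵀx₀ + α·((Fᵀp)ⱼ − γⱼ) − ε`. -/
theorem disturbance_forces_cost {n m l : ℕ}
    (A : Matrix (Fin n) (Fin n) ℝ) (B : Matrix (Fin n) (Fin m) ℝ)
    (F : Matrix (Fin n) (Fin l) ℝ) (E : Matrix (Fin m) (Fin n) ℝ)
    (s : Fin n → ℝ) (r : Fin m → ℝ) (γ : Fin l → ℝ)
    (hF : ∀ i j, 0 ≤ F i j)
    (hE : ∀ i j, 0 ≤ E i j)
    (hA : ∀ i j, ((Matrix.of fun i j => |B i j|) * E) i j ≤ A i j)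
    (hs : ∀ j, Eᵀ.mulVec (fun i => |r i|) j < s j)
    (p : Fin n → ℝ) (hp : 0 ≤ p) (hT : p ≤ Tbell A B E s r p)
    (j : Fin l) (hj : γ j < Fᵀ.mulVec p j)
    (α : ℝ) (hα : 0 ≤ α)
    (w : ℕ → Fin l → ℝ)
    (hw0 : w 0 = fun i => if i = j then α else 0)
    (hwt : ∀ t, 1 ≤ t → w t = 0)
    (x₀ : Fin n → ℝ) (hx₀ : 0 ≤ x₀)
    (x : ℕ → Fin n → ℝ) (u : ℕ → Fin m → ℝ)
    (hx0 : x 0 = x₀)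
    (hu : ∀ t i, |u t i| ≤ E.mulVec (x t) i)
    (hdyn : ∀ t, x (t + 1) = A.mulVec (x t) + B.mulVec (u t) + F.mulVec (w t)) :
    ∀ ε : ℝ, 0 < ε →
      ∃ᶠ N : ℕ in atTop,
        p ⬝ᵥ x₀ + α * (Fᵀ.mulVec p j - γ j) - ε <
          ∑ t ∈ Finset.range (N + 1), (s ⬝ᵥ x t + r ⬝ᵥ u t - γ ⬝ᵥ w t) := by
  classical
  intro ε hε
  -- nonnegativity of disturbance
  have hwnn : ∀ t i, 0 ≤ w t i := by
    intro t i
    rcases Nat.eq_zero_or_pos t with h | h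
    · subst h; rw [hw0]; dsimp only; split <;> simp [hα]
    · simp [hwt t h]
  -- nonnegativity of state
  have hxnn : ∀ t i, 0 ≤ x t i := by
    intro t
    induction t with
    | zero => intro i; rw [hx0]; exact hx₀ i
    | succ t ih =>
      intro i
      rw [hdyn t]
      have hFw : 0 ≤ F.mulVec (w t) i := by
        simp only [Matrix.mulVec, dotProduct]
        exact Finset.sum_nonneg fun k _ => mul_nonneg (hF i k) (hwnn t k)
      have hBu : ∀ k, -(|B i k| * E.mulVec (x t) k) ≤ B i k * u t k := by
        intro k
        calc -(|B i k| * E.mulVec (x t) k)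
            ≤ -(|B i k| * |u t k|) :=
              neg_le_neg (mul_le_mul_of_nonneg_left (hu t k) (abs_nonneg _))
          _ = -|B i k * u t k| := by rw [abs_mul]
          _ ≤ B i k * u t k := neg_abs_le _
      have hsum : ∑ k, |B i k| * E.mulVec (x t) k ≤ A.mulVec (x t) i := by
        have h1 : ∑ k, |B i k| * E.mulVec (x t) k
            = ((Matrix.of fun i j => |B i j|) * E).mulVec (x t) i := by
          rw [← Matrix.mulVec_mulVec]
          rfl
        rw [h1]
        simp only [Matrix.mulVec, dotProduct]
        exact Finset.sum_le_sum fun c _ => mul_le_mul_of_nonneg_right (hA i c) (ih c)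
      have hBu' : -(A.mulVec (x t) i) ≤ B.mulVec (u t) i := by
        have h3 : -(∑ k, |B i k| * E.mulVec (x t) k) ≤ B.mulVec (u t) i := by
          rw [neg_le]
          calc -(B.mulVec (u t) i) = ∑ k, -(B i k * u t k) := by
                simp [Matrix.mulVec, dotProduct]
            _ ≤ ∑ k, |B i k| * E.mulVec (x t) k :=
                Finset.sum_le_sum fun k _ => by
                  have := hBu k; linarith
        linarith
      have h4 : 0 ≤ A.mulVec (x t) i + B.mulVec (u t) i := by linarith
      simpa using add_nonneg h4 hFw
  -- the key stage inequality
  have key : ∀ t, p ⬝ᵥ x t - p ⬝ᵥ x (t+1) + p ⬝ᵥ F.mulVec (w t)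
      ≤ s ⬝ᵥ x t + r ⬝ᵥ u t := by
    intro t
    have hx1 : p ⬝ᵥ x (t+1)
        = Aᵀ.mulVec p ⬝ᵥ x t + Bᵀ.mulVec p ⬝ᵥ u t + p ⬝ᵥ F.mulVec (w t) := by
      rw [hdyn t, dotProduct_add, dotProduct_add,
        Matrix.dotProduct_mulVec, ← Matrix.mulVec_transpose,
        Matrix.dotProduct_mulVec (v := p) (A := B), ← Matrix.mulVec_transpose]
    rw [hx1]
    have hTp : ∀ i, p i ≤ s i + Aᵀ.mulVec p i
        - Eᵀ.mulVec (fun k => |(r + Bᵀ.mulVec p) k|) i := fun i => hT i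
    have hdot : p ⬝ᵥ x t ≤ s ⬝ᵥ x t + Aᵀ.mulVec p ⬝ᵥ x t
        - (Eᵀ.mulVec (fun k => |(r + Bᵀ.mulVec p) k|)) ⬝ᵥ x t := by
      have h5 : ∀ i, p i * x t i ≤ (s i + Aᵀ.mulVec p i
          - Eᵀ.mulVec (fun k => |(r + Bᵀ.mulVec p) k|) i) * x t i := fun i =>
        mul_le_mul_of_nonneg_right (hTp i) (hxnn t i)
      calc p ⬝ᵥ x t ≤ ∑ i, (s i + Aᵀ.mulVec p i
            - Eᵀ.mulVec (fun k => |(r + Bᵀ.mulVec p) k|) i) * x t i :=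
          Finset.sum_le_sum fun i _ => h5 i
        _ = _ := by simp [dotProduct, sub_mul, add_mul, Finset.sum_add_distrib,
            Finset.sum_sub_distrib]
    have hEq : (Eᵀ.mulVec (fun k => |(r + Bᵀ.mulVec p) k|)) ⬝ᵥ x t
        = ∑ k, |(r + Bᵀ.mulVec p) k| * E.mulVec (x t) k := by
      rw [Matrix.mulVec_transpose, ← Matrix.dotProduct_mulVec]
      rfl
    have hqu : -(∑ k, |(r + Bᵀ.mulVec p) k| * E.mulVec (x t) k)
        ≤ r ⬝ᵥ u t + Bᵀ.mulVec p ⬝ᵥ u t := by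
      have h2 : r ⬝ᵥ u t + Bᵀ.mulVec p ⬝ᵥ u t = ∑ k, (r + Bᵀ.mulVec p) k * u t k := by
        simp [dotProduct, add_mul, Finset.sum_add_distrib]
      rw [h2, neg_le]
      calc -(∑ k, (r + Bᵀ.mulVec p) k * u t k) = ∑ k, -((r + Bᵀ.mulVec p) k * u t k) := by
            rw [← Finset.sum_neg_distrib]
        _ ≤ ∑ k, |(r + Bᵀ.mulVec p) k| * E.mulVec (x t) k := by
            refine Finset.sum_le_sum fun k _ => ?_
            calc -((r + Bᵀ.mulVec p) k * u t k) ≤ |(r + Bᵀ.mulVec p) k * u t k| := neg_le_abs _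
              _ = |(r + Bᵀ.mulVec p) k| * |u t k| := abs_mul _ _
              _ ≤ |(r + Bᵀ.mulVec p) k| * E.mulVec (x t) k :=
                  mul_le_mul_of_nonneg_left (hu t k) (abs_nonneg _)
    rw [hEq] at hdot
    linarith
  -- value of the disturbance terms
  have hw0F : p ⬝ᵥ F.mulVec (w 0) = α * Fᵀ.mulVec p j := by
    rw [Matrix.dotProduct_mulVec, ← Matrix.mulVec_transpose, hw0]
    simp [dotProduct, mul_comm]
  have hw0γ : γ ⬝ᵥ w 0 = α * γ j := by
    rw [hw0]; simp [dotProduct, mul_comm]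
  have hpx0 : p ⬝ᵥ x 0 = p ⬝ᵥ x₀ := by rw [hx0]
  -- telescoping lower bound
  have tele : ∀ N, p ⬝ᵥ x₀ - p ⬝ᵥ x (N+1) + α * (Fᵀ.mulVec p j - γ j)
      ≤ ∑ t ∈ Finset.range (N + 1), (s ⬝ᵥ x t + r ⬝ᵥ u t - γ ⬝ᵥ w t) := by
    intro N
    have h1 : ∑ t ∈ Finset.range (N + 1), ((p ⬝ᵥ x t - p ⬝ᵥ x (t+1))
        + (p ⬝ᵥ F.mulVec (w t) - γ ⬝ᵥ w t))
        ≤ ∑ t ∈ Finset.range (N + 1), (s ⬝ᵥ x t + r ⬝ᵥ u t - γ ⬝ᵥ w t) := by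
      refine Finset.sum_le_sum fun t _ => ?_
      have := key t; linarith
    have h2 : ∑ t ∈ Finset.range (N + 1), ((p ⬝ᵥ x t - p ⬝ᵥ x (t+1))
        + (p ⬝ᵥ F.mulVec (w t) - γ ⬝ᵥ w t))
        = (p ⬝ᵥ x 0 - p ⬝ᵥ x (N+1)) + (α * Fᵀ.mulVec p j - α * γ j) := by
      rw [Finset.sum_add_distrib]
      congr 1
      · exact Finset.sum_range_sub' (fun t => p ⬝ᵥ x t) (N+1)
      · rw [Finset.sum_eq_single_of_mem 0 (Finset.mem_range.mpr (Nat.succ_pos N))]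
        · rw [hw0F, hw0γ]
        · intro b _ hb
          rw [hwt b (Nat.one_le_iff_ne_zero.mpr hb)]
          simp [Matrix.mulVec_zero]
    rw [h2, hpx0] at h1
    have := mul_sub α (Fᵀ.mulVec p j) (γ j)
    linarith
  -- now the frequently statement
  rw [Filter.frequently_atTop]
  intro N₀
  by_cases hcase : ∃ N, N₀ ≤ N ∧ p ⬝ᵥ x (N+1) ≤ ε/2
  · obtain ⟨N, hN, hle⟩ := hcase
    refine ⟨N, hN, ?_⟩
    have := tele N
    linarith
  · push_neg at hcase
    have hne : Nonempty (Fin n) := by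
      by_contra hne
      have hie : IsEmpty (Fin n) := not_nonempty_iff.mp hne
      have h0 : p ⬝ᵥ x (N₀+1) = 0 := by simp [dotProduct]
      have := hcase N₀ le_rfl
      rw [h0] at this
      linarith
    set M := (∑ i, p i) + 1 with hM
    have hM0 : 0 < M := by
      have : 0 ≤ ∑ i, p i := Finset.sum_nonneg fun i _ => hp i
      simp only [hM]; linarith
    have hpM : ∀ i, p i ≤ M := fun i => by
      have := Finset.single_le_sum (f := p) (fun i _ => hp i) (Finset.mem_univ i)
      simp only [hM]; linarith
    set δ := Finset.univ.inf' Finset.univ_nonempty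
      (fun i => s i - Eᵀ.mulVec (fun k => |r k|) i) with hδ
    have hδ0 : 0 < δ := by
      rw [hδ, Finset.lt_inf'_iff]
      intro i _
      have := hs i
      linarith
    have hδle : ∀ i, δ ≤ s i - Eᵀ.mulVec (fun k => |r k|) i := fun i =>
      Finset.inf'_le _ (Finset.mem_univ i)
    set β := δ * (ε/2/M) with hβ
    have hβ0 : 0 < β := by positivity
    -- stage lower bound for late times
    have stage : ∀ t, N₀ + 1 ≤ t → β ≤ s ⬝ᵥ x t + r ⬝ᵥ u t - γ ⬝ᵥ w t := by
      intro t ht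
      obtain ⟨N, rfl⟩ : ∃ N, t = N + 1 := ⟨t - 1, by omega⟩
      have hpxt : ε/2 < p ⬝ᵥ x (N+1) := hcase N (by omega)
      have hxsum : ε/2/M < ∑ i, x (N+1) i := by
        have hub : p ⬝ᵥ x (N+1) ≤ M * ∑ i, x (N+1) i := by
          rw [Finset.mul_sum]
          exact Finset.sum_le_sum fun i _ =>
            mul_le_mul_of_nonneg_right (hpM i) (hxnn (N+1) i)
        rw [div_lt_iff₀ hM0]
        calc ε/2 < p ⬝ᵥ x (N+1) := hpxt
          _ ≤ M * ∑ i, x (N+1) i := hub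
          _ = (∑ i, x (N+1) i) * M := mul_comm _ _
      have hwz : γ ⬝ᵥ w (N+1) = 0 := by
        rw [hwt (N+1) (by omega)]; simp [dotProduct]
      have hru : -(Eᵀ.mulVec (fun k => |r k|) ⬝ᵥ x (N+1)) ≤ r ⬝ᵥ u (N+1) := by
        have hEq : Eᵀ.mulVec (fun k => |r k|) ⬝ᵥ x (N+1)
            = ∑ k, |r k| * E.mulVec (x (N+1)) k := by
          rw [Matrix.mulVec_transpose, ← Matrix.dotProduct_mulVec]
          rfl
        rw [hEq, neg_le]
        calc -(r ⬝ᵥ u (N+1)) = ∑ k, -(r k * u (N+1) k) := by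
              simp [dotProduct]
          _ ≤ ∑ k, |r k| * E.mulVec (x (N+1)) k := by
              refine Finset.sum_le_sum fun k _ => ?_
              calc -(r k * u (N+1) k) ≤ |r k * u (N+1) k| := neg_le_abs _
                _ = |r k| * |u (N+1) k| := abs_mul _ _
                _ ≤ |r k| * E.mulVec (x (N+1)) k :=
                    mul_le_mul_of_nonneg_left (hu (N+1) k) (abs_nonneg _)
      have hlow : δ * ∑ i, x (N+1) i
          ≤ s ⬝ᵥ x (N+1) - Eᵀ.mulVec (fun k => |r k|) ⬝ᵥ x (N+1) := by
        have : s ⬝ᵥ x (N+1) - Eᵀ.mulVec (fun k => |r k|) ⬝ᵥ x (N+1)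
            = ∑ i, (s i - Eᵀ.mulVec (fun k => |r k|) i) * x (N+1) i := by
          simp [dotProduct, sub_mul, Finset.sum_sub_distrib]
        rw [this, Finset.mul_sum]
        exact Finset.sum_le_sum fun i _ =>
          mul_le_mul_of_nonneg_right (hδle i) (hxnn (N+1) i)
      have hfin : β ≤ δ * ∑ i, x (N+1) i := by
        rw [hβ]
        exact mul_le_mul_of_nonneg_left (le_of_lt hxsum) (le_of_lt hδ0)
      rw [hwz]
      linarith
    -- choose a far enough horizon
    set C := ∑ t ∈ Finset.range (N₀ + 1), (s ⬝ᵥ x t + r ⬝ᵥ u t - γ ⬝ᵥ w t) with hC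
    obtain ⟨k, hk⟩ := exists_nat_gt ((p ⬝ᵥ x₀ + α * (Fᵀ.mulVec p j - γ j) - ε - C) / β)
    refine ⟨N₀ + k, Nat.le_add_right _ _, ?_⟩
    have hsplit : ∑ t ∈ Finset.range (N₀ + k + 1), (s ⬝ᵥ x t + r ⬝ᵥ u t - γ ⬝ᵥ w t)
        = C + ∑ t ∈ Finset.Ico (N₀ + 1) (N₀ + k + 1), (s ⬝ᵥ x t + r ⬝ᵥ u t - γ ⬝ᵥ w t) := by
      rw [hC]
      exact (Finset.sum_range_add_sum_Ico _ (by omega)).symm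
    have hIco : (k : ℝ) * β ≤ ∑ t ∈ Finset.Ico (N₀ + 1) (N₀ + k + 1),
        (s ⬝ᵥ x t + r ⬝ᵥ u t - γ ⬝ᵥ w t) := by
      have := Finset.card_nsmul_le_sum (Finset.Ico (N₀ + 1) (N₀ + k + 1))
        (fun t => s ⬝ᵥ x t + r ⬝ᵥ u t - γ ⬝ᵥ w t) β
        (fun t ht => stage t (Finset.mem_Ico.mp ht).1)
      rw [Nat.card_Ico] at this
      have hcard : N₀ + k + 1 - (N₀ + 1) = k := by omega
      rw [hcard, nsmul_eq_mul] at this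
      exact this
    have hkβ : p ⬝ᵥ x₀ + α * (Fᵀ.mulVec p j - γ j) - ε - C < (k : ℝ) * β :=
      (div_lt_iff₀ hβ0).mp hk
    rw [hsplit]
    linarith
end
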